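/- Let (V,l,r) be a bimodule of a Novikov algebra (A,∘) and T: V → A an anti-O-operator. Define u≻v := −l(T(u))v, u≺v := −r(T(v))u, u·v := u≻v + u≺v. Then (V,≻,≺) is an anti-pre-Novikov algebra if and only if T is strong, i.e. l(T(u)∘T(v) − T(v)∘T(u))w + r(T(u)∘T(w))v − r(T(v)∘T(w))u = 0 for all u,v,w ∈ V. -/

import Mathlib

def APNAxioms {A : Type*} [AddCommGroup A] (succ prec : A → A → A) : Prop :=
  (∀ x y z : A, succ ((succ x y + prec x y) - (succ y x + prec y x)) z
      = succ y (succ x z) - succ x (succ y z)) ∧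
  (∀ x y z : A, prec x (succ y z + prec y z)
      = prec (succ y x) z - prec (prec x y) z - succ y (prec x z)) ∧
  (∀ x y z : A, succ (succ x y + prec x y) z = -(prec (succ x z) y)) ∧
  (∀ x y z : A, prec (prec x y) z = prec (prec x z) y) ∧
  (∀ x y z : A, prec ((succ x y + prec x y) - (succ y x + prec y x)) z
      = succ x (succ y z + prec y z) - succ y (succ x z + prec x z))
def NovikovAxioms {A : Type*} [AddCommGroup A] (circ : A → A → A) : Prop :=
  (∀ x y z : A, circ (circ x y) z - circ x (circ y z)
      = circ (circ y x) z - circ y (circ x z)) ∧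
  (∀ x y z : A, circ (circ x y) z = circ (circ x z) y)
def NovikovBimodule {k A V : Type*} [Field k] [AddCommGroup A] [Module k A]
    [AddCommGroup V] [Module k V]
    (circ : A →ₗ[k] A →ₗ[k] A) (l r : A →ₗ[k] V →ₗ[k] V) : Prop :=
  (∀ (x y : A) (v : V), l (circ x y - circ y x) v = l x (l y v) - l y (l x v)) ∧
  (∀ (x y : A) (v : V), l x (r y v) - r y (l x v) = r (circ x y) v - r y (r x v)) ∧
  (∀ (x y : A) (v : V), l (circ x y) v = r y (l x v)) ∧
  (∀ (x y : A) (v : V), r x (r y v) = r y (r x v))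

/-! The induced products are built so that `T` carries `u · v` to `T u ∘ T v`; with this, the
first four anti-pre-Novikov identities become bimodule axioms evaluated at elements of `T V`.
The fifth one is different: expanding both sides with the two bimodule axioms on `l` of a
commutator and on `r (x ∘ y)`, their difference is exactly the defect measuring strongness. -/

section InducedProducts

variable {R A V : Type*} [CommRing R] [AddCommGroup A] [Module R A] [AddCommGroup V] [Module R V]
  (circ : A →ₗ[R] A →ₗ[R] A) (l r : A →ₗ[R] V →ₗ[R] V) (T : V →ₗ[R] A)

def IsAntiOOperator : Prop :=
  ∀ u v : V, circ (T u) (T v) = -T (l (T u) v + r (T v) u)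

def inducedSucc (u v : V) : V := -(l (T u) v)

def inducedPrec (u v : V) : V := -(r (T v) u)

/-- `T` is strong exactly when this vanishes identically. -/
def strongDefect (u v w : V) : V :=
  l (circ (T u) (T v) - circ (T v) (T u)) w + r (circ (T u) (T w)) v - r (circ (T v) (T w)) u

variable {circ l r T}

theorem IsAntiOOperator.map_inducedSucc_add_inducedPrec (hT : IsAntiOOperator circ l r T)
    (u v : V) : T (inducedSucc l T u v + inducedPrec r T u v) = circ (T u) (T v) := by
  rw [hT, inducedSucc, inducedPrec, ← neg_add, map_neg]

theorem IsAntiOOperator.inducedSucc_commutator (hT : IsAntiOOperator circ l r T)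
    (hl : ∀ (x y : A) (v : V), l (circ x y - circ y x) v = l x (l y v) - l y (l x v))
    (u v w : V) :
    inducedSucc l T ((inducedSucc l T u v + inducedPrec r T u v)
        - (inducedSucc l T v u + inducedPrec r T v u)) w
      = inducedSucc l T v (inducedSucc l T u w) - inducedSucc l T u (inducedSucc l T v w) := by
  rw [inducedSucc, map_sub, hT.map_inducedSucc_add_inducedPrec,
    hT.map_inducedSucc_add_inducedPrec, hl]
  simp only [inducedSucc, map_neg, neg_neg]
  abel

theorem IsAntiOOperator.inducedPrec_mul
    (hT : IsAntiOOperator circ l r T)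
    (hlr : ∀ (x y : A) (v : V), l x (r y v) - r y (l x v) = r (circ x y) v - r y (r x v))
    (u v w : V) :
    inducedPrec r T u (inducedSucc l T v w + inducedPrec r T v w)
      = inducedPrec r T (inducedSucc l T v u) w - inducedPrec r T (inducedPrec r T u v) w
        - inducedSucc l T v (inducedPrec r T u w) := by
  rw [inducedPrec, hT.map_inducedSucc_add_inducedPrec,
    sub_eq_iff_eq_add.mp (hlr (T v) (T w) u).symm]
  simp only [inducedSucc, inducedPrec, map_neg, neg_neg]
  abel

theorem IsAntiOOperator.inducedSucc_mul
    (hT : IsAntiOOperator circ l r T)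
    (hlc : ∀ (x y : A) (v : V), l (circ x y) v = r y (l x v)) (u v w : V) :
    inducedSucc l T (inducedSucc l T u v + inducedPrec r T u v) w
      = -inducedPrec r T (inducedSucc l T u w) v := by
  rw [inducedSucc, hT.map_inducedSucc_add_inducedPrec, hlc]
  simp only [inducedSucc, inducedPrec, map_neg, neg_neg]

theorem inducedPrec_inducedPrec_comm (hrr : ∀ (x y : A) (v : V), r x (r y v) = r y (r x v))
    (u v w : V) :
    inducedPrec r T (inducedPrec r T u v) w = inducedPrec r T (inducedPrec r T u w) v := by
  simp only [inducedPrec, map_neg, neg_neg, hrr (T w)]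

theorem inducedPrec_commutator_sub
    (hl : ∀ (x y : A) (v : V), l (circ x y - circ y x) v = l x (l y v) - l y (l x v))
    (hlr : ∀ (x y : A) (v : V), l x (r y v) - r y (l x v) = r (circ x y) v - r y (r x v))
    (u v w : V) :
    inducedPrec r T ((inducedSucc l T u v + inducedPrec r T u v)
        - (inducedSucc l T v u + inducedPrec r T v u)) w
      - (inducedSucc l T u (inducedSucc l T v w + inducedPrec r T v w)
        - inducedSucc l T v (inducedSucc l T u w + inducedPrec r T u w))
      = -strongDefect circ l r T u v w := by
  rw [strongDefect, hl, sub_eq_iff_eq_add.mp (hlr (T u) (T w) v).symm,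
    sub_eq_iff_eq_add.mp (hlr (T v) (T w) u).symm]
  simp only [inducedSucc, inducedPrec, map_add, map_sub, map_neg]
  abel

end InducedProducts

theorem stmt11_general {k A V : Type*} [Field k] [AddCommGroup A] [Module k A]
    [AddCommGroup V] [Module k V]
    (circ : A →ₗ[k] A →ₗ[k] A) (l r : A →ₗ[k] V →ₗ[k] V)
    (hBim : NovikovBimodule circ l r)
    (T : V →ₗ[k] A)
    (hT : ∀ u v : V, circ (T u) (T v) = -T (l (T u) v + r (T v) u))
    (sd pd : V → V → V)
    (hsd : ∀ u v, sd u v = -(l (T u) v))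
    (hpd : ∀ u v, pd u v = -(r (T v) u)) :
    APNAxioms sd pd ↔
      (∀ u v w : V,
        l (circ (T u) (T v) - circ (T v) (T u)) w
          + r (circ (T u) (T w)) v - r (circ (T v) (T w)) u = 0) := by
  obtain ⟨hl, hlr, hlc, hrr⟩ := hBim
  obtain rfl : sd = inducedSucc l T := funext₂ hsd
  obtain rfl : pd = inducedPrec r T := funext₂ hpd
  have hT : IsAntiOOperator circ l r T := hT
  have fifth := inducedPrec_commutator_sub (T := T) hl hlr
  constructor
  · rintro ⟨-, -, -, -, h5⟩ u v w
    have h := fifth u v w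
    rwa [sub_eq_zero.mpr (h5 u v w), eq_comm, neg_eq_zero] at h
  · intro hstrong
    refine ⟨hT.inducedSucc_commutator hl, hT.inducedPrec_mul hlr, hT.inducedSucc_mul hlc,
      inducedPrec_inducedPrec_comm hrr, fun u v w => ?_⟩
    rw [← sub_eq_zero, fifth, strongDefect, hstrong, neg_zero]

theorem stmt11 {k A V : Type*} [Field k] [AddCommGroup A] [Module k A]
    [AddCommGroup V] [Module k V]
    (circ : A →ₗ[k] A →ₗ[k] A) (l r : A →ₗ[k] V →ₗ[k] V)
    (hNov : NovikovAxioms (fun x y => circ x y))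
    (hBim : NovikovBimodule circ l r)
    (T : V →ₗ[k] A)
    (hT : ∀ u v : V, circ (T u) (T v) = -T (l (T u) v + r (T v) u))
    (sd pd : V → V → V)
    (hsd : ∀ u v, sd u v = -(l (T u) v))
    (hpd : ∀ u v, pd u v = -(r (T v) u)) :
    APNAxioms sd pd ↔
      (∀ u v w : V,
        l (circ (T u) (T v) - circ (T v) (T u)) w
          + r (circ (T u) (T w)) v - r (circ (T v) (T w)) u = 0) :=
  stmt11_general circ l r hBim T hT sd pd hsd hpd
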